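/- Let L : ℝᵐ → ℝ be continuous, (wₖ) a bounded sequence with ‖wₖ₊₁ - wₖ‖ → 0, and suppose there exist subgradients dₖ₊₁ ∈ ∂L(wₖ₊₁) with ‖dₖ₊₁‖ ≤ c₂‖wₖ₊₁ - wₖ‖ for some c₂ > 0, where ∂L denotes the Fréchet subdifferential. If additionally L is convex (so ∂L is the convex subdifferential), then every limit point w* of (wₖ) satisfies 0 ∈ ∂L(w*), i.e., w* is a minimizer of L. -/
import Mathlib


open Filter Topology
open scoped RealInnerProductSpace

/-- Limit-point stationarity for a convex `L`: with vanishing displacement and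
subgradients `d (k+1) ∈ ∂L(w (k+1))` bounded by the displacement, every limit point
of the iterates is a minimizer of `L`. -/
theorem limit_point_stationarity {m : ℕ} (L : EuclideanSpace ℝ (Fin m) → ℝ)
    (hcont : Continuous L) (hconv : ConvexOn ℝ Set.univ L)
    (w d : ℕ → EuclideanSpace ℝ (Fin m)) (B c₂ : ℝ) (hc₂ : 0 < c₂)
    (hbdd : ∀ k, ‖w k‖ ≤ B)
    (hdisp : Tendsto (fun k => ‖w (k + 1) - w k‖) atTop (𝓝 0))
    (hsubgrad : ∀ k v, L (w (k + 1)) + ⟪d (k + 1), v - w (k + 1)⟫ ≤ L v)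
    (hdbound : ∀ k, ‖d (k + 1)‖ ≤ c₂ * ‖w (k + 1) - w k‖) :
    ∀ wstar : EuclideanSpace ℝ (Fin m), MapClusterPt wstar atTop w →
      ∀ v, L wstar ≤ L v := by
  intro wstar hcl v
  obtain ⟨φ, hφ, hφt⟩ := TopologicalSpace.FirstCountableTopology.tendsto_subseq hcl
  have hφatTop : Tendsto φ atTop atTop := hφ.tendsto_atTop
  -- displacement along subsequence tends to 0
  have hdispφ : Tendsto (fun k => ‖w (φ k + 1) - w (φ k)‖) atTop (𝓝 0) :=
    hdisp.comp hφatTop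
  -- w (φ k + 1) → wstar
  have hw1 : Tendsto (fun k => w (φ k + 1)) atTop (𝓝 wstar) := by
    have hdiff : Tendsto (fun k => w (φ k + 1) - w (φ k)) atTop (𝓝 0) := by
      rwa [tendsto_zero_iff_norm_tendsto_zero]
    have := hdiff.add hφt
    simpa using this
  -- d (φ k + 1) → 0
  have hd0 : Tendsto (fun k => d (φ k + 1)) atTop (𝓝 0) := by
    rw [tendsto_zero_iff_norm_tendsto_zero]
    have hle : ∀ k, ‖d (φ k + 1)‖ ≤ c₂ * ‖w (φ k + 1) - w (φ k)‖ := fun k => hdbound (φ k)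
    have : Tendsto (fun k => c₂ * ‖w (φ k + 1) - w (φ k)‖) atTop (𝓝 (c₂ * 0)) :=
      hdispφ.const_mul c₂
    rw [mul_zero] at this
    exact squeeze_zero (fun k => norm_nonneg _) hle this
  -- pass the inequality to the limit
  have hLlim : Tendsto (fun k => L (w (φ k + 1)) + ⟪d (φ k + 1), v - w (φ k + 1)⟫)
      atTop (𝓝 (L wstar + ⟪(0 : EuclideanSpace ℝ (Fin m)), v - wstar⟫)) := by
    apply Tendsto.add
    · exact (hcont.tendsto wstar).comp hw1
    · exact Tendsto.inner hd0 (tendsto_const_nhds.sub hw1)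
  rw [inner_zero_left, add_zero] at hLlim
  exact le_of_tendsto hLlim (Eventually.of_forall fun k => hsubgrad (φ k) v)
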